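/- For n ≥ 3, the maximum over all bijective labelings of the maturity weight of the cycle C_n equals the maximum over all bijective labelings of the maturity weight of the path P_n plus 1; that is, max_f Σ_{uv ∈ E(C_n)} |f(u) - f(v)| = (⌊n²/2⌋ - 1) + 1 = ⌊n²/2⌋. -/

import Mathlib

open scoped Classical

/-- The maturity weight of a graph `G` under a vertex labeling `f`:
the sum over all edges of the absolute difference of endpoint labels. -/
noncomputable def mw {V : Type*} [Fintype V] (G : SimpleGraph V) (f : V → ℕ) : ℕ :=
  ∑ e ∈ G.edgeSet.toFinset,
    Sym2.lift ⟨fun u v => ((f u : ℤ) - (f v : ℤ)).natAbs, fun u v => by dsimp only; omega⟩ e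

/-!
Write `|a - b|` as the number of thresholds `t < n` with `a < t ≤ b` or `b < t ≤ a`, and exchange
the sums. For two injections `f g` into `Fin n`, at most `min t (n - t)` points have `f` below `t`
and `g` at least `t` (and likewise the other way round), so `∑ |f - g| ≤ ∑ₜ 2 min t (n - t) =
⌊n²/2⌋`. Taking `g = f ∘ finRotate` bounds the cycle, and the zigzag labeling `0, n-1, 1, n-2, …`
attains the bound. The path is the cycle minus the edge from the last vertex to the first, which
has weight at least `1`; rotating the zigzag so that this edge joins two consecutive labels shows
that `⌊n²/2⌋ - 1` is attained.
-/

open Finset Function SimpleGraph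

theorem sum_range_two_mul_min_sub (n : ℕ) : ∑ t ∈ range n, 2 * min t (n - t) = n ^ 2 / 2 := by
  induction n using Nat.twoStepInduction with
  | zero => rfl
  | one => rfl
  | more n ih _ =>
    have hshift : ∀ s ∈ range (n + 1),
        2 * min (s + 1) (n + 2 - (s + 1)) = 2 * min s (n - s) + 2 :=
      fun s hs => by rw [mem_range] at hs; omega
    rw [sum_range_succ', sum_congr rfl hshift, sum_add_distrib, sum_range_succ, ih]
    simp only [Nat.sub_self, _root_.min_zero, sum_const, card_range, smul_eq_mul]
    have : (n + 2) ^ 2 = n ^ 2 + 2 * (2 * (n + 1)) := by ring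
    omega

theorem natAbs_sub_eq_card_filter {a b n : ℕ} (ha : a < n) (hb : b < n) :
    ((a : ℤ) - b).natAbs = #{t ∈ range n | a < t ∧ t ≤ b ∨ b < t ∧ t ≤ a} := by
  have : {t ∈ range n | a < t ∧ t ≤ b ∨ b < t ∧ t ≤ a} = Ioc (min a b) (max a b) := by
    ext t
    simp only [mem_filter, mem_range, mem_Ioc]
    omega
  rw [this, Nat.card_Ioc]
  omega

theorem card_filter_lt_and_le_le_min {α : Type*} [Fintype α] {n : ℕ} {f g : α → Fin n}
    (hf : Injective f) (hg : Injective g) (t : ℕ) :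
    #{a | (f a : ℕ) < t ∧ t ≤ g a} ≤ min t (n - t) := by
  refine le_min ?_ ?_
  · calc _ ≤ #(range t) := card_le_card_of_injOn (fun a => (f a : ℕ))
          (fun a ha => by simp_all) (Fin.val_injective.comp hf).injOn
      _ = t := card_range t
  · calc _ ≤ #(Ico t n) := card_le_card_of_injOn (fun a => (g a : ℕ))
          (fun a ha => by simp_all) (Fin.val_injective.comp hg).injOn
      _ = n - t := Nat.card_Ico t n

theorem sum_natAbs_sub_le {α : Type*} [Fintype α] {n : ℕ} {f g : α → Fin n}
    (hf : Injective f) (hg : Injective g) :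
    ∑ a, (((f a : ℕ) : ℤ) - (g a : ℕ)).natAbs ≤ n ^ 2 / 2 := by
  calc ∑ a, (((f a : ℕ) : ℤ) - (g a : ℕ)).natAbs
      = ∑ a, #{t ∈ range n | (f a : ℕ) < t ∧ t ≤ g a ∨ (g a : ℕ) < t ∧ t ≤ f a} :=
        sum_congr rfl fun a _ => natAbs_sub_eq_card_filter (f a).2 (g a).2
    _ = ∑ t ∈ range n, #{a | (f a : ℕ) < t ∧ t ≤ g a ∨ (g a : ℕ) < t ∧ t ≤ f a} :=
        sum_card_bipartiteAbove_eq_sum_card_bipartiteBelow _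
    _ ≤ ∑ t ∈ range n, 2 * min t (n - t) := by
        refine sum_le_sum fun t _ => ?_
        rw [filter_or, two_mul]
        exact (card_union_le _ _).trans (add_le_add (card_filter_lt_and_le_le_min hf hg t)
          (card_filter_lt_and_le_le_min hg hf t))
    _ = n ^ 2 / 2 := sum_range_two_mul_min_sub n

theorem mw_add_const {V : Type*} [Fintype V] (G : SimpleGraph V) (l : V → ℕ) (c : ℕ) :
    mw G (fun v => l v + c) = mw G l := by
  refine sum_congr rfl fun e _ => ?_
  induction e using Sym2.ind
  simp only [Sym2.lift_mk]
  omega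

theorem mw_eq_sum_of_edgeSet_eq_range {V ι : Type*} [Fintype V] [Fintype ι]
    {G : SimpleGraph V} {a b : ι → V} (hinj : Injective fun i => s(a i, b i))
    (hG : G.edgeSet = Set.range fun i => s(a i, b i)) (l : V → ℕ) :
    mw G l = ∑ i, ((l (a i) : ℤ) - l (b i)).natAbs := by
  have : G.edgeSet.toFinset = univ.image fun i => s(a i, b i) := by
    ext e
    simp [hG]
  rw [mw, this, sum_image fun i _ j _ h => hinj h]
  rfl

theorem cycleGraph_edgeSet {n : ℕ} (hn : 2 ≤ n) :
    (cycleGraph n).edgeSet = Set.range fun i => s(i, finRotate n i) := by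
  obtain ⟨m, rfl⟩ : ∃ m, n = m + 2 := ⟨n - 2, by omega⟩
  ext e
  induction e using Sym2.ind with
  | _ u v =>
    simp only [mem_edgeSet, cycleGraph_adj, finRotate_apply, Set.mem_range, Sym2.eq_iff,
      sub_eq_iff_eq_add]
    constructor
    · rintro (h | h)
      · exact ⟨v, Or.inr ⟨rfl, (add_comm _ _).trans h.symm⟩⟩
      · exact ⟨u, Or.inl ⟨rfl, (add_comm _ _).trans h.symm⟩⟩
    · rintro ⟨i, ⟨rfl, rfl⟩ | ⟨rfl, rfl⟩⟩
      · exact Or.inr (add_comm _ _)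
      · exact Or.inl (add_comm _ _)

theorem injective_sym2_mk_finRotate {n : ℕ} (hn : 3 ≤ n) :
    Injective fun i => s(i, finRotate n i) := by
  obtain ⟨m, rfl⟩ : ∃ m, n = m + 3 := ⟨n - 3, by omega⟩
  intro i j hij
  simp only [finRotate_apply, Sym2.eq_iff] at hij
  rcases hij with ⟨h, -⟩ | ⟨rfl, h⟩
  · exact h
  · have : (1 + 1 : Fin (m + 3)) = 0 := by
      simpa [add_assoc] using h
    rw [Fin.ext_iff, Fin.val_add, Fin.val_one, Nat.mod_eq_of_lt (by omega)] at this
    simp at this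

theorem pathGraph_edgeSet (m : ℕ) :
    (pathGraph (m + 1)).edgeSet = Set.range fun i : Fin m => s(i.castSucc, i.succ) := by
  ext e
  induction e using Sym2.ind with
  | _ u v =>
    simp only [mem_edgeSet, pathGraph_adj, Set.mem_range, Sym2.eq_iff]
    constructor
    · rintro (h | h)
      · exact ⟨⟨u, by omega⟩, Or.inl ⟨rfl, Fin.ext h⟩⟩
      · exact ⟨⟨v, by omega⟩, Or.inr ⟨rfl, Fin.ext h⟩⟩
    · rintro ⟨i, ⟨rfl, rfl⟩ | ⟨rfl, rfl⟩⟩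
      · exact Or.inl rfl
      · exact Or.inr rfl

theorem mw_cycleGraph {n : ℕ} (hn : 3 ≤ n) (l : Fin n → ℕ) :
    mw (cycleGraph n) l = ∑ i, ((l i : ℤ) - l (finRotate n i)).natAbs :=
  mw_eq_sum_of_edgeSet_eq_range (injective_sym2_mk_finRotate hn) (cycleGraph_edgeSet (by omega)) l

theorem mw_pathGraph (m : ℕ) (l : Fin (m + 1) → ℕ) :
    mw (pathGraph (m + 1)) l = ∑ i : Fin m, ((l i.castSucc : ℤ) - l i.succ).natAbs :=
  mw_eq_sum_of_edgeSet_eq_range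
    (fun i j h => Fin.ext (by
      simp only [Sym2.eq_iff, Fin.ext_iff, Fin.val_castSucc, Fin.val_succ] at h
      omega))
    (pathGraph_edgeSet m) l

theorem mw_cycleGraph_eq_mw_pathGraph_add {m : ℕ} (hm : 2 ≤ m) (l : Fin (m + 1) → ℕ) :
    mw (cycleGraph (m + 1)) l
      = mw (pathGraph (m + 1)) l + ((l (Fin.last m) : ℤ) - l 0).natAbs := by
  rw [mw_cycleGraph (by omega), mw_pathGraph, Fin.sum_univ_castSucc, finRotate_last]
  simp only [finRotate_apply, Fin.coeSucc_eq_succ]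

theorem mw_cycleGraph_comp_finRotate_symm {n : ℕ} (hn : 3 ≤ n) (l : Fin n → ℕ) :
    mw (cycleGraph n) (fun v => l ((finRotate n).symm v)) = mw (cycleGraph n) l := by
  rw [mw_cycleGraph hn, mw_cycleGraph hn, ← Equiv.sum_comp (finRotate n)]
  simp only [Equiv.symm_apply_apply]

theorem mw_cycleGraph_le {n : ℕ} (hn : 3 ≤ n) {f : Fin n → Fin n} (hf : Injective f) :
    mw (cycleGraph n) (fun v => f v) ≤ n ^ 2 / 2 := by
  rw [mw_cycleGraph hn]
  exact sum_natAbs_sub_le hf (hf.comp (finRotate n).injective)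

theorem mw_pathGraph_lt_mw_cycleGraph {m : ℕ} (hm : 2 ≤ m) {l : Fin (m + 1) → ℕ}
    (hl : Injective l) : mw (pathGraph (m + 1)) l < mw (cycleGraph (m + 1)) l := by
  have hwrap : l (Fin.last m) ≠ l 0 :=
    hl.ne (Fin.ext_iff.not.mpr (by simp only [Fin.val_last, Fin.val_zero]; omega))
  rw [mw_cycleGraph_eq_mw_pathGraph_add hm]
  omega

def zigzag (n k : ℕ) : ℕ := if k % 2 = 0 then k / 2 else n - 1 - k / 2

theorem zigzag_lt {n k : ℕ} (hk : k < n) : zigzag n k < n := by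
  unfold zigzag
  split_ifs <;> omega

theorem zigzag_injOn (n : ℕ) : Set.InjOn (zigzag n) (Set.Iio n) := by
  intro a ha b hb h
  simp only [Set.mem_Iio] at ha hb
  unfold zigzag at h
  split_ifs at h <;> omega

theorem natAbs_zigzag_sub_zigzag_succ {n k : ℕ} (hk : k + 1 < n) :
    ((zigzag n k : ℤ) - zigzag n (k + 1)).natAbs = n - 1 - k := by
  unfold zigzag
  split_ifs <;> omega

noncomputable def zigzagEquiv (n : ℕ) : Fin n ≃ Fin n :=
  Equiv.ofBijective (fun k => ⟨zigzag n k, zigzag_lt k.2⟩) <| Finite.injective_iff_bijective.mp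
    fun a b h => Fin.ext (zigzag_injOn n a.2 b.2 (congrArg Fin.val h))

theorem two_mul_mw_pathGraph_zigzag (m : ℕ) :
    2 * mw (pathGraph (m + 1)) (fun v => zigzag (m + 1) v) = m * (m + 1) := by
  rw [mw_pathGraph]
  simp only [Fin.val_castSucc, Fin.val_succ]
  rw [Fin.sum_univ_eq_sum_range
      (fun k => ((zigzag (m + 1) k : ℤ) - zigzag (m + 1) (k + 1)).natAbs),
    sum_congr rfl fun k hk => natAbs_zigzag_sub_zigzag_succ (by rw [mem_range] at hk; omega),
    ← sum_range_reflect, sum_congr rfl fun k hk => (by rw [mem_range] at hk; omega : _ = k + 1),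
    ← add_zero (∑ k ∈ range m, (k + 1)), ← sum_range_succ' (fun k => k), mul_comm,
    sum_range_id_mul_two, Nat.add_sub_cancel, mul_comm]

theorem mw_cycleGraph_zigzag {n : ℕ} (hn : 3 ≤ n) :
    mw (cycleGraph n) (fun v => zigzag n v) = n ^ 2 / 2 := by
  obtain ⟨m, rfl⟩ : ∃ m, n = m + 1 := ⟨n - 1, by omega⟩
  have hpath := two_mul_mw_pathGraph_zigzag m
  rw [mw_cycleGraph_eq_mw_pathGraph_add (by omega)]
  simp only [Fin.val_last, Fin.val_zero]
  generalize mw (pathGraph (m + 1)) _ = p at hpath ⊢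
  have hsq : (m + 1) ^ 2 = m * (m + 1) + m + 1 := by ring
  unfold zigzag
  split_ifs <;> omega

theorem mw_pathGraph_zigzag_comp_finRotate_symm {n : ℕ} (hn : 3 ≤ n) :
    mw (pathGraph n) (fun v => zigzag n ((finRotate n).symm v)) = n ^ 2 / 2 - 1 := by
  obtain ⟨m, rfl⟩ : ∃ m, n = m + 1 := ⟨n - 1, by omega⟩
  have hcycle := mw_cycleGraph_comp_finRotate_symm hn (fun v => zigzag (m + 1) v)
  rw [mw_cycleGraph_zigzag hn, mw_cycleGraph_eq_mw_pathGraph_add (by omega)] at hcycle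
  have hlast : (finRotate (m + 1)).symm (Fin.last m) = ⟨m - 1, by omega⟩ := by
    rw [Equiv.symm_apply_eq, finRotate_of_lt (by omega : m - 1 < m)]
    ext
    simp only [Fin.val_last]
    omega
  have hzero : (finRotate (m + 1)).symm 0 = Fin.last m := by
    rw [Equiv.symm_apply_eq, finRotate_last]
  have hwrap := natAbs_zigzag_sub_zigzag_succ (n := m + 1) (k := m - 1) (by omega)
  rw [Nat.sub_add_cancel (by omega)] at hwrap
  rw [hlast, hzero, Fin.val_last, hwrap] at hcycle
  omega

theorem stmt_11 {n : ℕ} (hn : 3 ≤ n) :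
    IsGreatest {m | ∃ f : Fin n ≃ Fin n,
      mw (SimpleGraph.cycleGraph n) (fun v => (f v : ℕ) + 1) = m} ((n ^ 2 / 2 - 1) + 1) ∧
    IsGreatest {m | ∃ f : Fin n ≃ Fin n,
      mw (SimpleGraph.pathGraph n) (fun v => (f v : ℕ) + 1) = m} (n ^ 2 / 2 - 1) ∧
    (n ^ 2 / 2 - 1) + 1 = n ^ 2 / 2 := by
  have hsq : 2 ≤ n ^ 2 / 2 := by nlinarith [Nat.div_add_mod (n ^ 2) 2, Nat.mod_lt (n ^ 2) two_pos]
  obtain ⟨m, rfl⟩ : ∃ m, n = m + 1 := ⟨n - 1, by omega⟩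
  refine ⟨⟨⟨zigzagEquiv _, ?_⟩, ?_⟩,
    ⟨⟨(finRotate _).symm.trans (zigzagEquiv _), ?_⟩, ?_⟩, by omega⟩
  · rw [mw_add_const]
    exact (mw_cycleGraph_zigzag hn).trans (by omega)
  · rintro _ ⟨f, rfl⟩
    rw [mw_add_const]
    exact (mw_cycleGraph_le hn f.injective).trans (by omega)
  · rw [mw_add_const]
    exact mw_pathGraph_zigzag_comp_finRotate_symm hn
  · rintro _ ⟨f, rfl⟩
    rw [mw_add_const]
    have := mw_cycleGraph_le hn f.injective
    have := mw_pathGraph_lt_mw_cycleGraph (l := fun v => (f v : ℕ)) (by omega)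
      (Fin.val_injective.comp f.injective)
    omega
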